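/- arXiv:1903.07150 — 3 statements merged into one kernel-verified Lean document; each statement's English description precedes it below -/
import Mathlib

section
/- Let F : ℝ^N × ℝ^N → ℝ be C¹ and everywhere positive, and suppose there exists θ > 0 such that ⟨F_x(x,v), x⟩ + ⟨F_v(x,v), v⟩ ≤ θ·F(x,v) for all (x,v). Then for every λ ≥ 1 and all (x,v), F(λx, λv) ≤ λ^θ · F(x,v). -/
open scoped RealInnerProductSpace

/-- If `F : ℝ^N × ℝ^N → ℝ` is C¹ and everywhere positive, and
`⟨F_x(x,v), x⟩ + ⟨F_v(x,v), v⟩ ≤ θ·F(x,v)` (the left-hand side being the total derivative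
of `F` at `(x,v)` applied to `(x,v)`), then `F(λx, λv) ≤ λ^θ · F(x,v)` for all `λ ≥ 1`. -/
theorem subhomogeneous_vector {N : ℕ}
    (F : EuclideanSpace ℝ (Fin N) × EuclideanSpace ℝ (Fin N) → ℝ) (θ : ℝ)
    (hF : ContDiff ℝ 1 F) (hpos : ∀ p, 0 < F p) (hθ : 0 < θ)
    (hAR : ∀ x v : EuclideanSpace ℝ (Fin N), fderiv ℝ F (x, v) (x, v) ≤ θ * F (x, v)) :
    ∀ l : ℝ, 1 ≤ l → ∀ x v : EuclideanSpace ℝ (Fin N),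
      F (l • x, l • v) ≤ l ^ θ * F (x, v) := by
  intro l hl x v
  set p : EuclideanSpace ℝ (Fin N) × EuclideanSpace ℝ (Fin N) := (x, v) with hp
  set h : ℝ → ℝ := fun s => F (s • p) * s ^ (-θ) with hh
  have hd : ∀ t : ℝ, 0 < t →
      HasDerivAt h
        (fderiv ℝ F (t • p) p * t ^ (-θ) + F (t • p) * ((-θ) * t ^ (-θ - 1))) t := by
    intro t ht
    have h1 : HasDerivAt (fun s : ℝ => s • p) p t := by
      simpa using (hasDerivAt_id t).smul_const p
    have h2 : HasDerivAt (fun s : ℝ => F (s • p)) (fderiv ℝ F (t • p) p) t := by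
      have hdF : HasFDerivAt F (fderiv ℝ F (t • p)) (t • p) :=
        (hF.differentiable one_ne_zero (t • p)).hasFDerivAt
      exact hdF.comp_hasDerivAt t h1
    have h3 : HasDerivAt (fun s : ℝ => s ^ (-θ)) ((-θ) * t ^ (-θ - 1)) t :=
      Real.hasDerivAt_rpow_const (Or.inl ht.ne')
    exact (h2.mul h3).congr_deriv (by ring)
  have hdiff : ∀ t ∈ Set.Icc (1 : ℝ) l, DifferentiableAt ℝ h t := by
    intro t ht
    exact (hd t (lt_of_lt_of_le one_pos ht.1)).differentiableAt
  have hanti : AntitoneOn h (Set.Icc 1 l) := by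
    apply antitoneOn_of_deriv_nonpos (convex_Icc 1 l)
    · exact fun t ht => (hdiff t ht).continuousAt.continuousWithinAt
    · intro t ht
      rw [interior_Icc] at ht
      exact (hdiff t ⟨ht.1.le, ht.2.le⟩).differentiableWithinAt
    · intro t ht
      rw [interior_Icc] at ht
      have ht0 : (0 : ℝ) < t := lt_trans one_pos ht.1
      rw [(hd t ht0).deriv]
      have hmap : fderiv ℝ F (t • p) (t • p) = t * fderiv ℝ F (t • p) p := by
        rw [map_smul, smul_eq_mul]
      have hARp : fderiv ℝ F (t • p) (t • p) ≤ θ * F (t • p) := by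
        have := hAR (t • x) (t • v)
        simpa [hp, Prod.smul_mk] using this
      have hD : fderiv ℝ F (t • p) p ≤ θ / t * F (t • p) := by
        rw [hmap] at hARp
        rw [div_mul_eq_mul_div, le_div_iff₀ ht0, mul_comm _ t]
        linarith
      have hpow : (0 : ℝ) < t ^ (-θ) := Real.rpow_pos_of_pos ht0 _
      have hsplit : t ^ (-θ - 1) = t ^ (-θ) / t := by
        rw [Real.rpow_sub ht0, Real.rpow_one]
      have h1 : fderiv ℝ F (t • p) p * t ^ (-θ) ≤ θ / t * F (t • p) * t ^ (-θ) :=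
        mul_le_mul_of_nonneg_right hD hpow.le
      have h2 : θ / t * F (t • p) * t ^ (-θ) = F (t • p) * (θ * t ^ (-θ - 1)) := by
        rw [hsplit]; field_simp
      nlinarith [hpos (t • p)]
  have hle : h l ≤ h 1 :=
    hanti (Set.left_mem_Icc.mpr hl) ⟨hl, le_rfl⟩ hl
  have hl0 : (0 : ℝ) < l := lt_of_lt_of_le one_pos hl
  have h1v : h 1 = F (x, v) := by simp [hh, hp]
  have hlv : h l = F (l • x, l • v) * l ^ (-θ) := by simp [hh, hp, Prod.smul_mk]
  rw [h1v, hlv] at hle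
  have hpow : (0 : ℝ) < l ^ θ := Real.rpow_pos_of_pos hl0 _
  have hinv : l ^ (-θ) * l ^ θ = 1 := by
    rw [← Real.rpow_add hl0]; simp
  calc F (l • x, l • v) = F (l • x, l • v) * l ^ (-θ) * l ^ θ := by
        rw [mul_assoc, hinv, mul_one]
    _ ≤ F (x, v) * l ^ θ := mul_le_mul_of_nonneg_right hle hpow.le
    _ = l ^ θ * F (x, v) := mul_comm _ _
end

section
/- Let I = [a,b], let F : I × ℝ^N × ℝ^N → ℝ be continuous, nonnegative, with F(t,x,·) convex and F(t,x,0) = 0 for all (t,x). Let u_n → u in measure (or a.e.) and u̇_n → u̇ a.e. on I, and suppose ∫_I F(t,u_n,u̇_n) dt → ∫_I F(t,u,u̇) dt and ∫_I F(t,u_n,−u̇) dt → ∫_I F(t,u,−u̇) dt. Then ∫_I F(t, u_n, (u̇_n − u̇)/2) dt → 0. -/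
open MeasureTheory Set Filter
open scoped Topology

/-- Key convergence step in the Palais–Smale argument. If `F` is continuous,
nonnegative, convex in its last variable with `F(t,x,0) = 0`, `u_n → u` a.e. and
`u̇_n → u̇` a.e. on `[a,b]`, and `∫ F(t,u_n,u̇_n) → ∫ F(t,u,u̇)` and
`∫ F(t,u_n,−u̇) → ∫ F(t,u,−u̇)`, then `∫ F(t,u_n,(u̇_n − u̇)/2) → 0`. -/
theorem key_convergence {N : ℕ}
    (a b : ℝ) (hab : a < b)
    (F : ℝ × EuclideanSpace ℝ (Fin N) × EuclideanSpace ℝ (Fin N) → ℝ)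
    (hFcont : Continuous F) (hFnn : ∀ p, 0 ≤ F p)
    (hFconv : ∀ t x, ConvexOn ℝ Set.univ (fun v => F (t, x, v)))
    (hF0 : ∀ t x, F (t, x, 0) = 0)
    (un : ℕ → ℝ → EuclideanSpace ℝ (Fin N)) (u : ℝ → EuclideanSpace ℝ (Fin N))
    (dun : ℕ → ℝ → EuclideanSpace ℝ (Fin N)) (du : ℝ → EuclideanSpace ℝ (Fin N))
    (huae : ∀ᵐ t ∂(volume.restrict (Icc a b)), Tendsto (fun n => un n t) atTop (𝓝 (u t)))
    (hduae : ∀ᵐ t ∂(volume.restrict (Icc a b)), Tendsto (fun n => dun n t) atTop (𝓝 (du t)))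
    (hI1 : ∀ n, IntegrableOn (fun t => F (t, un n t, dun n t)) (Icc a b))
    (hI2 : ∀ n, IntegrableOn (fun t => F (t, un n t, -du t)) (Icc a b))
    (hI3 : IntegrableOn (fun t => F (t, u t, du t)) (Icc a b))
    (hI4 : IntegrableOn (fun t => F (t, u t, -du t)) (Icc a b))
    (hI5 : ∀ n, IntegrableOn (fun t => F (t, un n t, (2 : ℝ)⁻¹ • (dun n t - du t))) (Icc a b))
    (hc1 : Tendsto (fun n => ∫ t in Icc a b, F (t, un n t, dun n t)) atTop
      (𝓝 (∫ t in Icc a b, F (t, u t, du t))))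
    (hc2 : Tendsto (fun n => ∫ t in Icc a b, F (t, un n t, -du t)) atTop
      (𝓝 (∫ t in Icc a b, F (t, u t, -du t)))) :
    Tendsto (fun n => ∫ t in Icc a b, F (t, un n t, (2 : ℝ)⁻¹ • (dun n t - du t)))
      atTop (𝓝 0) := by
  set μ := volume.restrict (Icc a b) with hμ
  -- the auxiliary nonnegative functions
  set g : ℕ → ℝ → ℝ := fun n t =>
    2⁻¹ * (F (t, un n t, dun n t) + F (t, un n t, -du t))
      - F (t, un n t, (2 : ℝ)⁻¹ • (dun n t - du t)) with hg
  set G : ℝ → ℝ := fun t => 2⁻¹ * (F (t, u t, du t) + F (t, u t, -du t)) with hG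
  -- pointwise nonnegativity by convexity
  have hsmul : ∀ (v w : EuclideanSpace ℝ (Fin N)),
      (2 : ℝ)⁻¹ • (v - w) = (2:ℝ)⁻¹ • v + (2:ℝ)⁻¹ • (-w) := by
    intro v w
    rw [smul_sub, smul_neg, sub_eq_add_neg]
  have hgnn : ∀ n t, 0 ≤ g n t := by
    intro n t
    have h := (hFconv t (un n t)).2 (mem_univ (dun n t)) (mem_univ (-du t))
      (by norm_num : (0:ℝ) ≤ 2⁻¹) (by norm_num : (0:ℝ) ≤ 2⁻¹) (by norm_num)
    simp only [hg]
    rw [hsmul]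
    simp only [smul_eq_mul] at h
    linarith
  have hgint : ∀ n, Integrable (g n) μ :=
    fun n => (((hI1 n).add (hI2 n)).const_mul 2⁻¹).sub (hI5 n)
  have hGnn : ∀ t, 0 ≤ G t := fun t => by
    have := hFnn (t, u t, du t); have := hFnn (t, u t, -du t); simp only [hG]; nlinarith
  have hGint : Integrable G μ := (hI3.add hI4).const_mul 2⁻¹
  -- a.e. convergence of g n t to G t
  have haec : ∀ᵐ t ∂μ, Tendsto (fun n => g n t) atTop (𝓝 (G t)) := by
    filter_upwards [huae, hduae] with t h1 h2
    have hA : Tendsto (fun n => F (t, un n t, dun n t)) atTop (𝓝 (F (t, u t, du t))) :=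
      (hFcont.tendsto _).comp (tendsto_const_nhds.prodMk_nhds (h1.prodMk_nhds h2))
    have hB : Tendsto (fun n => F (t, un n t, -du t)) atTop (𝓝 (F (t, u t, -du t))) :=
      (hFcont.tendsto _).comp (tendsto_const_nhds.prodMk_nhds (h1.prodMk_nhds tendsto_const_nhds))
    have hin : Tendsto (fun n => (2:ℝ)⁻¹ • (dun n t - du t)) atTop (𝓝 0) := by
      have := ((h2.sub (tendsto_const_nhds (x := du t))).const_smul ((2:ℝ)⁻¹))
      simpa using this
    have hC : Tendsto (fun n => F (t, un n t, (2:ℝ)⁻¹ • (dun n t - du t))) atTop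
        (𝓝 (F (t, u t, 0))) :=
      (hFcont.tendsto _).comp (tendsto_const_nhds.prodMk_nhds (h1.prodMk_nhds hin))
    have := ((hA.add hB).const_mul (2:ℝ)⁻¹).sub hC
    rw [hF0] at this
    simpa [hg, hG] using this
  -- Fatou
  have hmeas : ∀ n, AEMeasurable (fun t => ENNReal.ofReal (g n t)) μ := fun n =>
    ENNReal.measurable_ofReal.comp_aemeasurable (hgint n).aestronglyMeasurable.aemeasurable
  have fatou := lintegral_liminf_le' hmeas (μ := μ) (u := atTop)
  have hLHS : ∫⁻ t, liminf (fun n => ENNReal.ofReal (g n t)) atTop ∂μ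
      = ENNReal.ofReal (∫ t, G t ∂μ) := by
    rw [ofReal_integral_eq_lintegral_ofReal hGint (Eventually.of_forall hGnn)]
    apply lintegral_congr_ae
    filter_upwards [haec] with t ht
    exact ((ENNReal.continuous_ofReal.tendsto _).comp ht).liminf_eq
  have hRHS : ∀ n, (∫⁻ t, ENNReal.ofReal (g n t) ∂μ) = ENNReal.ofReal (∫ t, g n t ∂μ) :=
    fun n => (ofReal_integral_eq_lintegral_ofReal (hgint n)
      (Eventually.of_forall (hgnn n))).symm
  rw [hLHS] at fatou
  simp only [hRHS] at fatou
  -- names for the real sequences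
  set C : ℕ → ℝ := fun n => ∫ t, F (t, un n t, (2 : ℝ)⁻¹ • (dun n t - du t)) ∂μ
    with hC
  set s : ℕ → ℝ := fun n => 2⁻¹ * ((∫ t, F (t, un n t, dun n t) ∂μ)
      + ∫ t, F (t, un n t, -du t) ∂μ) with hs
  have hxg : ∀ n, (∫ t, g n t ∂μ) = s n - C n := by
    intro n
    have hint : Integrable (fun t => 2⁻¹ * (F (t, un n t, dun n t) + F (t, un n t, -du t))) μ :=
      by exact ((hI1 n).add (hI2 n)).const_mul 2⁻¹
    have hadd : Integrable (fun t => F (t, un n t, dun n t) + F (t, un n t, -du t)) μ :=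
      by exact (hI1 n).add (hI2 n)
    simp only [hg, hs, hC]
    rw [integral_sub hint (hI5 n), integral_const_mul, integral_add (hI1 n) (hI2 n)]
  have hSG : (∫ t, G t ∂μ) = 2⁻¹ * ((∫ t, F (t, u t, du t) ∂μ)
      + ∫ t, F (t, u t, -du t) ∂μ) := by
    simp only [hG]
    rw [integral_const_mul, integral_add hI3 hI4]
  set S : ℝ := ∫ t, G t ∂μ with hSdef
  have hsS : Tendsto s atTop (𝓝 S) := by
    rw [hSG]
    exact (hc1.add hc2).const_mul 2⁻¹
  have hCnn : ∀ n, 0 ≤ C n := fun n => integral_nonneg (fun t => hFnn _)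
  have hxnn : ∀ n, 0 ≤ (∫ t, g n t ∂μ) := fun n => integral_nonneg (hgnn n)
  -- conclude
  rw [tendsto_order]
  constructor
  · intro c hc
    exact Eventually.of_forall (fun n => lt_of_lt_of_le hc (hCnn n))
  · intro c hc
    -- eventually s n - C n > S - c/2
    have hev1 : ∀ᶠ n in atTop, S - c/2 < s n - C n := by
      rcases lt_or_ge (S - c/2) 0 with h | h
      · exact Eventually.of_forall (fun n => lt_of_lt_of_le h (by rw [← hxg n]; exact hxnn n))
      · have hlt : ENNReal.ofReal (S - c/2) < ENNReal.ofReal S := by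
          rw [ENNReal.ofReal_lt_ofReal_iff (by linarith)]
          linarith
        have := eventually_lt_of_lt_liminf (lt_of_lt_of_le hlt fatou)
        filter_upwards [this] with n hn
        rw [← hxg n]
        exact (ENNReal.ofReal_lt_ofReal_iff_of_nonneg h).1 hn
    have hev2 : ∀ᶠ n in atTop, s n < S + c/2 := hsS.eventually (eventually_lt_nhds (by linarith))
    filter_upwards [hev1, hev2] with n h1 h2
    linarith
end

section
/- Let V : [a,b] × ℝ^N → ℝ be continuous with V(t,x) < 0 for all t and |x| ≥ r_0, and let F, θ_F, θ_V be as in the Ambrosetti–Rabinowitz setting with 1 < θ_F < θ_V. Fix an absolutely continuous u_0 : [a,b] → ℝ^N vanishing at the endpoints with |{t : |u_0(t)| ≥ r_0}| > 0, and suppose F(t, λu_0, λu̇_0) ≤ λ^{θ_F} F(t,u_0,u̇_0) and V(t, λx) ≤ λ^{θ_V} V(t,x) for |x| ≥ r_0, λ > 1. Then J(λ u_0) → −∞ as λ → ∞, where J(u) = ∫_a^b [F(t,u,u̇) + V(t,u) + ⟨f(t), u⟩] dt with f ∈ L¹. -/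
open MeasureTheory Set Filter
open scoped RealInnerProductSpace

private lemma poly_tendsto_atBot (A B M C θF θV : ℝ) (hB : B < 0)
    (h1 : 1 < θF) (h2 : θF < θV) :
    Tendsto (fun l : ℝ => A * l ^ θF + B * l ^ θV + M + C * l) atTop atBot := by
  have hθV : (0:ℝ) < θV := by linarith
  have hinner : Tendsto (fun l : ℝ =>
      A * l ^ (θF - θV) + B + M * l ^ (-θV) + C * l ^ (1 - θV)) atTop (nhds B) := by
    have t1 : Tendsto (fun l : ℝ => A * l ^ (θF - θV)) atTop (nhds 0) := by
      have : Tendsto (fun l : ℝ => l ^ (θF - θV)) atTop (nhds 0) := by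
        have := tendsto_rpow_neg_atTop (y := θV - θF) (by linarith)
        simpa [neg_sub] using this
      simpa using this.const_mul A
    have t2 : Tendsto (fun l : ℝ => M * l ^ (-θV)) atTop (nhds 0) := by
      have := tendsto_rpow_neg_atTop hθV
      simpa using this.const_mul M
    have t3 : Tendsto (fun l : ℝ => C * l ^ (1 - θV)) atTop (nhds 0) := by
      have : Tendsto (fun l : ℝ => l ^ (1 - θV)) atTop (nhds 0) := by
        have := tendsto_rpow_neg_atTop (y := θV - 1) (by linarith)
        simpa [neg_sub] using this
      simpa using this.const_mul C
    have := ((t1.add (tendsto_const_nhds (x := B))).add t2).add t3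
    simpa using this
  have key : Tendsto (fun l : ℝ =>
      l ^ θV * (A * l ^ (θF - θV) + B + M * l ^ (-θV) + C * l ^ (1 - θV)))
      atTop atBot :=
    Tendsto.atTop_mul_neg hB (tendsto_rpow_atTop hθV) hinner
  refine key.congr' ?_
  filter_upwards [eventually_gt_atTop (0:ℝ)] with l hl
  have e1 : l ^ θV * l ^ (θF - θV) = l ^ θF := by
    rw [← Real.rpow_add hl]; ring_nf
  have e2 : l ^ θV * l ^ (-θV) = 1 := by
    rw [← Real.rpow_add hl, add_neg_cancel, Real.rpow_zero]
  have e3 : l ^ θV * l ^ (1 - θV) = l := by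
    rw [← Real.rpow_add hl]; norm_num
  calc l ^ θV * (A * l ^ (θF - θV) + B + M * l ^ (-θV) + C * l ^ (1 - θV))
      = A * (l ^ θV * l ^ (θF - θV)) + B * l ^ θV + M * (l ^ θV * l ^ (-θV))
        + C * (l ^ θV * l ^ (1 - θV)) := by ring
    _ = A * l ^ θF + B * l ^ θV + M + C * l := by rw [e1, e2, e3]; ring


/-- Lemma 4.4 (mountain pass geometry, the point with negative energy).
With `V(t,x) < 0` for `|x| ≥ r_0`, `1 < θ_F < θ_V`, `u_0` absolutely continuous vanishing
at the endpoints with `|{t : |u_0(t)| ≥ r_0}| > 0`, and the subhomogeneity bounds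
`F(t,λu_0,λu̇_0) ≤ λ^{θ_F} F(t,u_0,u̇_0)` and `V(t,λx) ≤ λ^{θ_V} V(t,x)` for `|x| ≥ r_0`,
the action `J(λu_0) = ∫ [F + V + ⟨f, λu_0⟩] dt` tends to `−∞` as `λ → ∞`. -/
theorem J_tendsto_atBot {N : ℕ} (a b : ℝ) (hab : a < b)
    (F : ℝ × EuclideanSpace ℝ (Fin N) × EuclideanSpace ℝ (Fin N) → ℝ)
    (V : ℝ × EuclideanSpace ℝ (Fin N) → ℝ)
    (f : ℝ → EuclideanSpace ℝ (Fin N))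
    (θF θV r0 : ℝ)
    (u0 du0 : ℝ → EuclideanSpace ℝ (Fin N))
    (hFcont : Continuous F) (hVcont : Continuous V)
    (hVneg : ∀ (t : ℝ) (x : EuclideanSpace ℝ (Fin N)),
      t ∈ Icc a b → r0 ≤ ‖x‖ → V (t, x) < 0)
    (hθF : 1 < θF) (hθ : θF < θV) (hr0 : 0 < r0)
    (hAC : ∀ t ∈ Icc a b, HasDerivAt u0 (du0 t) t)
    (hu0a : u0 a = 0) (hu0b : u0 b = 0)
    (hbig : 0 < volume {t ∈ Icc a b | r0 ≤ ‖u0 t‖})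
    (hFsub : ∀ l : ℝ, 1 < l → ∀ t ∈ Icc a b,
      F (t, l • u0 t, l • du0 t) ≤ l ^ θF * F (t, u0 t, du0 t))
    (hVsub : ∀ l : ℝ, 1 < l → ∀ t ∈ Icc a b, ∀ x : EuclideanSpace ℝ (Fin N),
      r0 ≤ ‖x‖ → V (t, l • x) ≤ l ^ θV * V (t, x))
    (hf : IntegrableOn f (Icc a b))
    (hIF : ∀ l : ℝ, IntegrableOn (fun t => F (t, l • u0 t, l • du0 t)) (Icc a b))
    (hIV : ∀ l : ℝ, IntegrableOn (fun t => V (t, l • u0 t)) (Icc a b))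
    (hIf : ∀ l : ℝ, IntegrableOn (fun t => ⟪f t, l • u0 t⟫) (Icc a b)) :
    Tendsto (fun l : ℝ =>
        ∫ t in Icc a b,
          (F (t, l • u0 t, l • du0 t) + V (t, l • u0 t) + ⟪f t, l • u0 t⟫))
      atTop atBot := by
  -- integrability at l = 1, rewritten without the smul
  have hIF1 : IntegrableOn (fun t => F (t, u0 t, du0 t)) (Icc a b) := by
    simpa using hIF 1
  have hIV1 : IntegrableOn (fun t => V (t, u0 t)) (Icc a b) := by
    simpa using hIV 1
  have hIf1 : IntegrableOn (fun t => ⟪f t, u0 t⟫) (Icc a b) := by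
    simpa using hIf 1
  -- uniform upper bound for V on Icc a b × ℝ^N
  obtain ⟨C0, hC0⟩ := (((isCompact_Icc (a := a) (b := b)).prod
      (isCompact_closedBall (0 : EuclideanSpace ℝ (Fin N)) r0))).exists_bound_of_continuousOn
      hVcont.continuousOn
  set M0 : ℝ := max C0 0 with hM0
  have hM0nn : 0 ≤ M0 := le_max_right _ _
  have hbound : ∀ t ∈ Icc a b, ∀ y : EuclideanSpace ℝ (Fin N), V (t, y) ≤ M0 := by
    intro t ht y
    by_cases hy : ‖y‖ ≤ r0
    · have := hC0 (t, y) (by exact ⟨ht, by simpa [Metric.mem_closedBall] using hy⟩)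
      calc V (t, y) ≤ ‖V (t, y)‖ := le_abs_self _
        _ ≤ C0 := this
        _ ≤ M0 := le_max_left _ _
    · push_neg at hy
      have hy0 : 0 < ‖y‖ := lt_trans hr0 hy
      set c : ℝ := ‖y‖ / r0 with hc
      have hc1 : 1 < c := (one_lt_div hr0).mpr hy
      have hcne : c ≠ 0 := by positivity
      set x : EuclideanSpace ℝ (Fin N) := c⁻¹ • y with hx
      have hxnorm : ‖x‖ = r0 := by
        rw [hx, norm_smul, norm_inv, Real.norm_eq_abs, abs_of_pos (by positivity : (0:ℝ) < c)]
        field_simp [hc]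
        rw [hc, div_mul_cancel₀ _ hr0.ne']
      have hyx : c • x = y := smul_inv_smul₀ hcne y
      have hVx : V (t, x) < 0 := hVneg t x ht (le_of_eq hxnorm.symm)
      have := hVsub c hc1 t ht x (le_of_eq hxnorm.symm)
      rw [hyx] at this
      have : V (t, y) < 0 := lt_of_le_of_lt this (by
        exact mul_neg_of_pos_of_neg (Real.rpow_pos_of_pos (by linarith) _) hVx)
      linarith
  -- the bad set S
  set S : Set ℝ := {t ∈ Icc a b | r0 ≤ ‖u0 t‖} with hS
  have hu0cont : ContinuousOn u0 (Icc a b) := fun t ht =>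
    (hAC t ht).continuousAt.continuousWithinAt
  have hSsub : S ⊆ Icc a b := fun t ht => ht.1
  have hScl : IsClosed S := by
    have : S = Icc a b ∩ (fun t => ‖u0 t‖) ⁻¹' (Ici r0) := by
      ext t; simp [hS, Set.mem_sep_iff, and_comm]
    rw [this]
    exact hu0cont.norm.preimage_isClosed_of_isClosed isClosed_Icc isClosed_Ici
  have hSmeas : MeasurableSet S := hScl.measurableSet
  have hSfin : volume S < ⊤ :=
    lt_of_le_of_lt (measure_mono hSsub) (by simp [Real.volume_Icc])
  -- B < 0
  set B : ℝ := ∫ t in S, V (t, u0 t) with hB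
  have hIVS : IntegrableOn (fun t => V (t, u0 t)) S := hIV1.mono_set hSsub
  have hBneg : B < 0 := by
    have hneg : ∀ t ∈ S, V (t, u0 t) < 0 := fun t ht => hVneg t (u0 t) ht.1 ht.2
    have hint : IntegrableOn (fun t => -V (t, u0 t)) S volume := hIVS.neg
    have hpos : 0 < ∫ t in S, -V (t, u0 t) := by
      rw [MeasureTheory.setIntegral_pos_iff_support_of_nonneg_ae ?hnn hint]
      · refine lt_of_lt_of_le hbig (measure_mono ?_)
        intro t ht
        have hv := hneg t ht
        refine ⟨?_, ht⟩
        simp only [Function.mem_support]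
        intro h
        rw [neg_eq_zero] at h
        linarith
      case hnn =>
        filter_upwards [ae_restrict_mem hSmeas] with t ht
        exact le_of_lt (by simpa using hneg t ht)
    have : ∫ t in S, -V (t, u0 t) = -B := by rw [hB, MeasureTheory.integral_neg]
    linarith [this ▸ hpos]
  -- constants
  set A : ℝ := ∫ t in Icc a b, F (t, u0 t, du0 t) with hA
  set Cc : ℝ := ∫ t in Icc a b, ⟪f t, u0 t⟫ with hCc
  set M : ℝ := M0 * (b - a) with hM
  refine tendsto_atBot_mono' atTop ?_ (poly_tendsto_atBot A B M Cc θF θV hBneg hθF hθ)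
  filter_upwards [eventually_gt_atTop (1:ℝ)] with l hl
  have hl0 : (0:ℝ) < l := by linarith
  -- split the integral
  have hFVl : IntegrableOn (fun t => F (t, l • u0 t, l • du0 t) + V (t, l • u0 t))
      (Icc a b) volume := (hIF l).add (hIV l)
  rw [MeasureTheory.integral_add hFVl (hIf l),
    MeasureTheory.integral_add (hIF l) (hIV l)]
  have bndF : (∫ t in Icc a b, F (t, l • u0 t, l • du0 t)) ≤ A * l ^ θF := by
    have := MeasureTheory.setIntegral_mono_on (hIF l) (hIF1.const_mul (l ^ θF))
      measurableSet_Icc (fun t ht => hFsub l hl t ht)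
    rwa [MeasureTheory.integral_const_mul, mul_comm] at this
  have bndf : (∫ t in Icc a b, ⟪f t, l • u0 t⟫) = Cc * l := by
    have : ∀ t, ⟪f t, l • u0 t⟫ = l * ⟪f t, u0 t⟫ := fun t => real_inner_smul_right _ _ _
    simp_rw [this]
    rw [MeasureTheory.integral_const_mul, mul_comm]
  have bndV : (∫ t in Icc a b, V (t, l • u0 t)) ≤ B * l ^ θV + M := by
    have hsplit : (∫ t in S, V (t, l • u0 t)) + (∫ t in Icc a b \ S, V (t, l • u0 t))
        = ∫ t in Icc a b, V (t, l • u0 t) := by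
      have := MeasureTheory.integral_inter_add_diff (μ := volume) (s := Icc a b) (t := S)
        (f := fun t => V (t, l • u0 t)) hSmeas (hIV l)
      rwa [Set.inter_eq_right.mpr hSsub] at this
    rw [← hsplit]
    have h1 : (∫ t in S, V (t, l • u0 t)) ≤ B * l ^ θV := by
      have := MeasureTheory.setIntegral_mono_on ((hIV l).mono_set hSsub)
        (hIVS.const_mul (l ^ θV)) hSmeas
        (fun t ht => hVsub l hl t ht.1 (u0 t) ht.2)
      rwa [MeasureTheory.integral_const_mul, mul_comm] at this
    have h2 : (∫ t in Icc a b \ S, V (t, l • u0 t)) ≤ M := by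
      have hdsub : Icc a b \ S ⊆ Icc a b := Set.diff_subset
      have hdfin : volume (Icc a b \ S) < ⊤ :=
        lt_of_le_of_lt (measure_mono hdsub) (by simp [Real.volume_Icc])
      have := MeasureTheory.setIntegral_mono_on ((hIV l).mono_set hdsub)
        (integrableOn_const hdfin.ne) (measurableSet_Icc.diff hSmeas)
        (fun t ht => hbound t ht.1 (l • u0 t))
      rw [MeasureTheory.setIntegral_const, smul_eq_mul] at this
      refine le_trans this ?_
      rw [hM, mul_comm M0]
      refine mul_le_mul_of_nonneg_right ?_ hM0nn
      have : volume (Icc a b \ S) ≤ ENNReal.ofReal (b - a) := by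
        refine le_trans (measure_mono hdsub) ?_
        simp [Real.volume_Icc]
      calc (volume (Icc a b \ S)).toReal ≤ (ENNReal.ofReal (b - a)).toReal :=
            ENNReal.toReal_mono (by simp) this
        _ = b - a := ENNReal.toReal_ofReal (by linarith)
    linarith
  linarith
end
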